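/- The real Lie algebra g₄² is solvable, yet it is not completely solvable: there exists no decreasing chain of Lie ideals g₄² = I₀ ⊃ I₁ ⊃ I₂ ⊃ I₃ ⊃ I₄ = 0 with dim Iₖ/Iₖ₊₁ = 1 for each k. In contrast, aff(ℝ) ⊕ aff(ℝ) is solvable and does admit such a chain of ideals with 1-dimensional successive quotients. -/

import Mathlib

open Module

section aux
variable {g : Type*} [LieRing g] [LieAlgebra ℝ g]

lemma lie_span_span_mem (s t : Set g) (P : Submodule ℝ g)
    (h : ∀ x ∈ s, ∀ y ∈ t, ⁅x, y⁆ ∈ P) :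
    ∀ x ∈ Submodule.span ℝ s, ∀ y ∈ Submodule.span ℝ t, ⁅x, y⁆ ∈ P := by
  have step1 : ∀ y ∈ t, ∀ x ∈ Submodule.span ℝ s, ⁅x, y⁆ ∈ P := by
    intro y hy x hx
    have hle : Submodule.span ℝ s ≤ P.comap (-((LieAlgebra.ad ℝ g) y)) := by
      apply Submodule.span_le.2
      intro z hz
      simp only [Submodule.mem_comap, LinearMap.neg_apply, LieAlgebra.ad_apply, SetLike.mem_coe]
      rw [lie_skew]
      exact h z hz y hy
    have hmem := hle hx
    rw [Submodule.mem_comap, LinearMap.neg_apply, LieAlgebra.ad_apply, lie_skew] at hmem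
    exact hmem
  intro x hx y hy
  have hle : Submodule.span ℝ t ≤ P.comap ((LieAlgebra.ad ℝ g) x) := by
    apply Submodule.span_le.2
    intro z hz
    simp only [Submodule.mem_comap, LieAlgebra.ad_apply, SetLike.mem_coe]
    exact step1 z hz x hx
  simpa only [Submodule.mem_comap, LieAlgebra.ad_apply] using hle hy

def mkIdeal {ι : Type*} (b : Basis ι ℝ g) (s : Set g)
    (h : ∀ i, ∀ y ∈ s, ⁅b i, y⁆ ∈ Submodule.span ℝ s) : LieIdeal ℝ g :=
  { Submodule.span ℝ s with
    lie_mem := fun {x n} hn => by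
      have hx : x ∈ Submodule.span ℝ (Set.range b) := by rw [b.span_eq]; trivial
      exact lie_span_span_mem (Set.range b) s _
        (by rintro _ ⟨i, rfl⟩ y hy; exact h i y hy) x hx n hn }

@[simp] lemma mkIdeal_toSubmodule {ι : Type*} (b : Basis ι ℝ g) (s : Set g) (h) :
    (mkIdeal b s h).toSubmodule = Submodule.span ℝ s := rfl

lemma mem_mkIdeal_iff {ι : Type*} (b : Basis ι ℝ g) (s : Set g) (h) (x : g) :
    x ∈ mkIdeal b s h ↔ x ∈ Submodule.span ℝ s := Iff.rfl

lemma solvable_of_ideal (I : LieIdeal ℝ g) (h1 : ∀ x y : g, ⁅x, y⁆ ∈ I)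
    (h2 : ∀ x ∈ I, ∀ y ∈ I, ⁅x, y⁆ = (0 : g)) : LieAlgebra.IsSolvable g := by
  rw [LieAlgebra.isSolvable_iff ℝ]
  refine ⟨2, le_bot_iff.mp ?_⟩
  have hD1 : LieAlgebra.derivedSeries ℝ g 1 ≤ I := by
    rw [show LieAlgebra.derivedSeries ℝ g 1 = ⁅(⊤ : LieIdeal ℝ g), (⊤ : LieIdeal ℝ g)⁆ from rfl]
    exact (LieSubmodule.lie_le_iff _ _ _).mpr fun x _ y _ => h1 x y
  have : LieAlgebra.derivedSeries ℝ g 2 ≤ ⁅I, I⁆ := by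
    rw [show LieAlgebra.derivedSeries ℝ g 2
        = ⁅LieAlgebra.derivedSeries ℝ g 1, LieAlgebra.derivedSeries ℝ g 1⁆ from rfl]
    exact LieSubmodule.mono_lie hD1 hD1
  refine this.trans ?_
  exact (LieSubmodule.lie_le_iff _ _ _).mpr fun x hx y hy => (LieSubmodule.mem_bot _).mpr (h2 x hx y hy)

end aux

def c42 (i j : Fin 4) : Fin 4 → ℝ :=
  if (i, j) = (0, 2) then ![0, 1, 0, 0]
  else if (i, j) = (1, 2) then ![-1, 0, 0, 0]
  else if (i, j) = (0, 3) then ![-1, 0, 0, 0]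
  else if (i, j) = (1, 3) then ![0, -1, 0, 0]
  else 0

section mpart
variable {m : Type} [LieRing m] [LieAlgebra ℝ m] (bm : Basis (Fin 4) ℝ m)
  (hm : ∀ i j : Fin 4, i < j → ⁅bm i, bm j⁆ = ∑ k, c42 i j k • bm k)
include hm

lemma br01 : ⁅bm 0, bm 1⁆ = 0 := by
  rw [hm 0 1 (by decide), Fin.sum_univ_four]
  simp +decide [c42]

lemma br02 : ⁅bm 0, bm 2⁆ = bm 1 := by
  rw [hm 0 2 (by decide), Fin.sum_univ_four]
  simp +decide [c42]

lemma br12 : ⁅bm 1, bm 2⁆ = -bm 0 := by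
  rw [hm 1 2 (by decide), Fin.sum_univ_four]
  simp +decide [c42]

lemma br03 : ⁅bm 0, bm 3⁆ = -bm 0 := by
  rw [hm 0 3 (by decide), Fin.sum_univ_four]
  simp +decide [c42]

lemma br13 : ⁅bm 1, bm 3⁆ = -bm 1 := by
  rw [hm 1 3 (by decide), Fin.sum_univ_four]
  simp +decide [c42]

lemma br23 : ⁅bm 2, bm 3⁆ = 0 := by
  rw [hm 2 3 (by decide), Fin.sum_univ_four]
  simp +decide [c42]
end mpart

section mpart2
variable {m : Type} [LieRing m] [LieAlgebra ℝ m] (bm : Basis (Fin 4) ℝ m)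
  (hm : ∀ i j : Fin 4, i < j → ⁅bm i, bm j⁆ = ∑ k, c42 i j k • bm k)
include hm

lemma brMmem : ∀ i j : Fin 4, ⁅bm i, bm j⁆ ∈ Submodule.span ℝ {bm 0, bm 1} := by
  have key : ∀ i j : Fin 4, i < j → ⁅bm i, bm j⁆ ∈ Submodule.span ℝ {bm 0, bm 1} := by
    intro i j hij
    have h0 : bm 0 ∈ Submodule.span ℝ {bm 0, bm 1} :=
      Submodule.subset_span (by left; rfl)
    have h1 : bm 1 ∈ Submodule.span ℝ {bm 0, bm 1} :=
      Submodule.subset_span (by right; rfl)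
    have h2 : c42 i j 2 = 0 := by
      unfold c42; split_ifs <;> simp +decide
    have h3 : c42 i j 3 = 0 := by
      unfold c42; split_ifs <;> simp +decide
    rw [hm i j hij, Fin.sum_univ_four, h2, h3, zero_smul, zero_smul, add_zero, add_zero]
    exact add_mem (Submodule.smul_mem _ _ h0) (Submodule.smul_mem _ _ h1)
  intro i j
  rcases lt_trichotomy i j with h | h | h
  · exact key i j h
  · subst h; rw [lie_self]; exact zero_mem _
  · rw [← lie_skew]; exact neg_mem (key j i h)

lemma msolvable : LieAlgebra.IsSolvable m := by
  have hid : ∀ i : Fin 4, ∀ y ∈ ({bm 0, bm 1} : Set m),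
      ⁅bm i, y⁆ ∈ Submodule.span ℝ {bm 0, bm 1} := by
    rintro i y (rfl | rfl)
    · exact brMmem bm hm i 0
    · exact brMmem bm hm i 1
  refine solvable_of_ideal (mkIdeal bm _ hid) ?_ ?_
  · intro x y
    have hx : x ∈ Submodule.span ℝ (Set.range bm) := by rw [bm.span_eq]; trivial
    have hy : y ∈ Submodule.span ℝ (Set.range bm) := by rw [bm.span_eq]; trivial
    exact lie_span_span_mem (Set.range bm) (Set.range bm) _
      (by rintro _ ⟨i, rfl⟩ _ ⟨j, rfl⟩; exact brMmem bm hm i j) x hx y hy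
  · intro x hx y hy
    have key : ∀ u ∈ ({bm 0, bm 1} : Set m), ∀ v ∈ ({bm 0, bm 1} : Set m),
        ⁅u, v⁆ ∈ (⊥ : Submodule ℝ m) := by
      rintro u (rfl | rfl) v (rfl | rfl) <;>
        simp [lie_self, br01 bm hm, ← lie_skew (bm 1) (bm 0)]
    have := lie_span_span_mem {bm 0, bm 1} {bm 0, bm 1} ⊥ key x hx y hy
    simpa using this

end mpart2

/-- A decreasing chain of Lie ideals `g = I₀ ⊃ I₁ ⊃ … ⊃ Iₙ = 0` with one-dimensional
successive quotients `Iₖ/Iₖ₊₁`. -/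
def HasCompleteFlagOfIdeals (g : Type*) [LieRing g] [LieAlgebra ℝ g] (n : ℕ) : Prop :=
  ∃ I : Fin (n + 1) → LieIdeal ℝ g,
    I 0 = ⊤ ∧ I (Fin.last n) = ⊥ ∧
    ∀ k : Fin n,
      I k.succ < I k.castSucc ∧
      finrank ℝ ((I k.castSucc).toSubmodule ⧸
        Submodule.comap (I k.castSucc).toSubmodule.subtype (I k.succ).toSubmodule) = 1

section mpart3
variable {m : Type} [LieRing m] [LieAlgebra ℝ m] (bm : Basis (Fin 4) ℝ m)
  (hm : ∀ i j : Fin 4, i < j → ⁅bm i, bm j⁆ = ∑ k, c42 i j k • bm k)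
include hm

lemma mnoflag : ¬ HasCompleteFlagOfIdeals m 4 := by
  rintro ⟨I, hI0, hIlast, hk⟩
  obtain ⟨hlt3, hq3⟩ := hk 3
  have hsucc : ((3 : Fin 4).succ) = Fin.last 4 := by decide
  rw [hsucc, hIlast] at hq3
  -- the quotient is by the zero submodule, so `I 3` has finrank 1
  have hker : Submodule.comap (I (3 : Fin 4).castSucc).toSubmodule.subtype
      ((⊥ : LieIdeal ℝ m).toSubmodule) = ⊥ := by
    rw [LieSubmodule.bot_toSubmodule, Submodule.comap_bot, Submodule.ker_subtype]
  rw [hker] at hq3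
  have hS1 : finrank ℝ (I (3 : Fin 4).castSucc).toSubmodule = 1 := by
    rw [← hq3]
    exact (Submodule.quotEquivOfEqBot _ rfl).finrank_eq.symm
  obtain ⟨v, hv0, hvgen⟩ := finrank_eq_one_iff'.mp hS1
  set x : m := (v : m) with hxdef
  have hx0 : x ≠ 0 := fun h => hv0 (Subtype.ext h)
  have hIdeal : ∀ u : m, ∃ c : ℝ, ⁅u, x⁆ = c • x := by
    intro u
    have hmem : ⁅u, x⁆ ∈ (I (3 : Fin 4).castSucc).toSubmodule := by
      exact (I (3 : Fin 4).castSucc).lie_mem v.2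
    obtain ⟨c, hc⟩ := hvgen ⟨⁅u, x⁆, hmem⟩
    exact ⟨c, by simpa using (congrArg Subtype.val hc).symm⟩
  -- bracket tables
  have hba : ⁅bm 2, bm 0⁆ = -bm 1 := by rw [← lie_skew, br02 bm hm]
  have hbb : ⁅bm 2, bm 1⁆ = bm 0 := by rw [← lie_skew, br12 bm hm, neg_neg]
  have hbd : ⁅bm 2, bm 3⁆ = 0 := br23 bm hm
  set r : Fin 4 → ℝ := fun k => bm.repr x k with hrdef
  have e2 : ⁅bm 2, x⁆ = r 1 • bm 0 - r 0 • bm 1 := by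
    conv_lhs => rw [← bm.sum_repr x]
    rw [show ⁅bm 2, ∑ i : Fin 4, bm.repr x i • bm i⁆
        = (LieAlgebra.ad ℝ m (bm 2)) (∑ i : Fin 4, bm.repr x i • bm i) from rfl,
      map_sum, Fin.sum_univ_four]
    simp only [LieAlgebra.ad_apply, lie_smul, hba, hbb, hbd, lie_self, smul_neg, smul_zero]
    abel
  obtain ⟨c, hc⟩ := hIdeal (bm 2)
  rw [e2] at hc
  have h00 : r 1 = c * r 0 := by
    have := congrArg (fun z => bm.repr z 0) hc
    simpa [Finsupp.single_apply, hrdef] using this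
  have h01 : -(r 0) = c * r 1 := by
    have := congrArg (fun z => bm.repr z 1) hc
    simpa [Finsupp.single_apply, hrdef] using this
  have hr0 : r 0 = 0 := by
    have hfac : r 0 * (1 + c ^ 2) = 0 := by linear_combination (-1 : ℝ) * h01 - c * h00
    rcases mul_eq_zero.mp hfac with h | h
    · exact h
    · nlinarith [sq_nonneg c]
  have hr1 : r 1 = 0 := by rw [h00, hr0, mul_zero]
  -- second bracket
  have e0 : ⁅bm 0, x⁆ = r 2 • bm 1 - r 3 • bm 0 := by
    conv_lhs => rw [← bm.sum_repr x]
    rw [show ⁅bm 0, ∑ i : Fin 4, bm.repr x i • bm i⁆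
        = (LieAlgebra.ad ℝ m (bm 0)) (∑ i : Fin 4, bm.repr x i • bm i) from rfl,
      map_sum, Fin.sum_univ_four]
    simp only [LieAlgebra.ad_apply, lie_smul, br01 bm hm, br02 bm hm, br03 bm hm, lie_self,
      smul_neg, smul_zero]
    abel
  obtain ⟨d, hd⟩ := hIdeal (bm 0)
  rw [e0] at hd
  have h10 : -(r 3) = d * r 0 := by
    have := congrArg (fun z => bm.repr z 0) hd
    simpa [Finsupp.single_apply, hrdef] using this
  have h11 : r 2 = d * r 1 := by
    have := congrArg (fun z => bm.repr z 1) hd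
    simpa [Finsupp.single_apply, hrdef] using this
  have hr3 : r 3 = 0 := by
    have := h10; rw [hr0, mul_zero] at this; linarith
  have hr2 : r 2 = 0 := by rw [h11, hr1, mul_zero]
  apply hx0
  have hrepr : bm.repr x = 0 := by
    ext k
    fin_cases k
    · exact hr0
    · exact hr1
    · exact hr2
    · exact hr3
  have := congrArg (fun f => bm.repr.symm f) hrepr
  simpa using this

end mpart3

def g3 : Fin 3 → Bool × Bool := ![(false, true), (true, true), (true, false)]
def g2 : Fin 2 → Bool × Bool := ![(false, true), (true, true)]
def g1 : Fin 1 → Bool × Bool := ![(true, true)]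

lemma quot_dim_one {g : Type} [LieRing g] [LieAlgebra ℝ g] [FiniteDimensional ℝ g]
    (p q : LieIdeal ℝ g) (hpq : p.toSubmodule ≤ q.toSubmodule)
    (np nq : ℕ) (hp : finrank ℝ p.toSubmodule = np) (hq : finrank ℝ q.toSubmodule = nq)
    (h : np + 1 = nq) :
    p < q ∧ finrank ℝ (q.toSubmodule ⧸
      Submodule.comap q.toSubmodule.subtype p.toSubmodule) = 1 := by
  have e1 := (Submodule.comapSubtypeEquivOfLe hpq).finrank_eq
  have e2 := Submodule.finrank_quotient_add_finrank
    (Submodule.comap q.toSubmodule.subtype p.toSubmodule)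
  constructor
  · refine lt_of_le_of_ne ((LieSubmodule.toSubmodule_le_toSubmodule _ _).mp hpq) ?_
    intro hEq
    rw [hEq] at hp
    omega
  · omega

section apart
variable {a : Type} [LieRing a] [LieAlgebra ℝ a] (ba : Basis (Bool × Bool) ℝ a)
  (ha1 : ∀ c : Bool, ⁅ba (c, false), ba (c, true)⁆ = ba (c, true))
  (ha2 : ∀ (c c' : Bool) (x y : Bool), c ≠ c' → ⁅ba (c, x), ba (c', y)⁆ = 0)

omit ha1 ha2 in
lemma ha3 (h : ∀ c : Bool, ⁅ba (c, false), ba (c, true)⁆ = ba (c, true)) (c : Bool) :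
    ⁅ba (c, true), ba (c, false)⁆ = -ba (c, true) := by
  rw [← lie_skew, h]

section sets
-- the three candidate ideals as spans
local notation "s3" => ({ba (false, true), ba (true, true), ba (true, false)} : Set a)
local notation "s2" => ({ba (false, true), ba (true, true)} : Set a)
local notation "s1" => ({ba (true, true)} : Set a)

include ha1 ha2

lemma hid3 : ∀ i : Bool × Bool, ∀ y ∈ s3, ⁅ba i, y⁆ ∈ Submodule.span ℝ s3 := by
  have huf : ba (false, true) ∈ Submodule.span ℝ s3 := Submodule.subset_span (by left; rfl)
  have hut : ba (true, true) ∈ Submodule.span ℝ s3 :=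
    Submodule.subset_span (by right; left; rfl)
  rintro ⟨c, z⟩ y (rfl | rfl | rfl) <;> cases c <;> cases z
  · rw [ha1]; exact huf
  · rw [lie_self]; exact zero_mem _
  · rw [ha2 true false false true (by decide)]; exact zero_mem _
  · rw [ha2 true false true true (by decide)]; exact zero_mem _
  · rw [ha2 false true false true (by decide)]; exact zero_mem _
  · rw [ha2 false true true true (by decide)]; exact zero_mem _
  · rw [ha1]; exact hut
  · rw [lie_self]; exact zero_mem _
  · rw [ha2 false true false false (by decide)]; exact zero_mem _
  · rw [ha2 false true true false (by decide)]; exact zero_mem _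
  · rw [lie_self]; exact zero_mem _
  · rw [ha3 ba ha1]; exact neg_mem hut

lemma hid2 : ∀ i : Bool × Bool, ∀ y ∈ s2, ⁅ba i, y⁆ ∈ Submodule.span ℝ s2 := by
  have huf : ba (false, true) ∈ Submodule.span ℝ s2 := Submodule.subset_span (by left; rfl)
  have hut : ba (true, true) ∈ Submodule.span ℝ s2 := Submodule.subset_span (by right; rfl)
  rintro ⟨c, z⟩ y (rfl | rfl) <;> cases c <;> cases z
  · rw [ha1]; exact huf
  · rw [lie_self]; exact zero_mem _
  · rw [ha2 true false false true (by decide)]; exact zero_mem _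
  · rw [ha2 true false true true (by decide)]; exact zero_mem _
  · rw [ha2 false true false true (by decide)]; exact zero_mem _
  · rw [ha2 false true true true (by decide)]; exact zero_mem _
  · rw [ha1]; exact hut
  · rw [lie_self]; exact zero_mem _

lemma hid1 : ∀ i : Bool × Bool, ∀ y ∈ s1, ⁅ba i, y⁆ ∈ Submodule.span ℝ s1 := by
  have hut : ba (true, true) ∈ Submodule.span ℝ s1 := Submodule.subset_span rfl
  rintro ⟨c, z⟩ y rfl <;> cases c <;> cases z
  · rw [ha2 false true false true (by decide)]; exact zero_mem _
  · rw [ha2 false true true true (by decide)]; exact zero_mem _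
  · rw [ha1]; exact hut
  · rw [lie_self]; exact zero_mem _

lemma asolvable : LieAlgebra.IsSolvable a := by
  have huf : ba (false, true) ∈ Submodule.span ℝ s2 := Submodule.subset_span (by left; rfl)
  have hut : ba (true, true) ∈ Submodule.span ℝ s2 := Submodule.subset_span (by right; rfl)
  refine solvable_of_ideal (mkIdeal ba _ (hid2 ba ha1 ha2)) ?_ ?_
  · intro x y
    have key : ∀ p q : Bool × Bool, ⁅ba p, ba q⁆ ∈ Submodule.span ℝ s2 := by
      rintro ⟨c, z⟩ ⟨c', z'⟩
      by_cases hcc : c = c'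
      · subst hcc
        cases z <;> cases z'
        · rw [lie_self]; exact zero_mem _
        · rw [ha1]; cases c
          · exact huf
          · exact hut
        · rw [ha3 ba ha1]
          refine neg_mem ?_
          cases c
          · exact huf
          · exact hut
        · rw [lie_self]; exact zero_mem _
      · rw [ha2 _ _ _ _ hcc]; exact zero_mem _
    have hx : x ∈ Submodule.span ℝ (Set.range ba) := by rw [ba.span_eq]; trivial
    have hy : y ∈ Submodule.span ℝ (Set.range ba) := by rw [ba.span_eq]; trivial
    exact lie_span_span_mem (Set.range ba) (Set.range ba) _
      (by rintro _ ⟨i, rfl⟩ _ ⟨j, rfl⟩; exact key i j) x hx y hy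
  · intro x hx y hy
    have key : ∀ u ∈ s2, ∀ v ∈ s2, ⁅u, v⁆ ∈ (⊥ : Submodule ℝ a) := by
      rintro u (rfl | rfl) v (rfl | rfl) <;> simp only [Submodule.mem_bot]
      · exact lie_self _
      · exact ha2 false true true true (by decide)
      · exact ha2 true false true true (by decide)
      · exact lie_self _
    have := lie_span_span_mem s2 s2 ⊥ key x hx y hy
    simpa using this

lemma aflag : HasCompleteFlagOfIdeals a 4 := by
  have instFD : FiniteDimensional ℝ a := Module.Finite.of_basis ba
  set W1 : LieIdeal ℝ a := mkIdeal ba _ (hid3 ba ha1 ha2) with hW1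
  set W2 : LieIdeal ℝ a := mkIdeal ba _ (hid2 ba ha1 ha2) with hW2
  set W3 : LieIdeal ℝ a := mkIdeal ba _ (hid1 ba ha1 ha2) with hW3
  -- finrank computations
  have hr3 : Set.range (ba ∘ g3) = s3 := by
    rw [Set.range_comp]
    have : Set.range g3 = ({(false, true), (true, true), (true, false)} : Set (Bool × Bool)) := by
      ext p
      simp [g3, Matrix.range_cons, Matrix.range_empty]
      tauto
    rw [this, Set.image_insert_eq, Set.image_insert_eq, Set.image_singleton]
  have hr2 : Set.range (ba ∘ g2) = s2 := by
    rw [Set.range_comp]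
    have : Set.range g2 = ({(false, true), (true, true)} : Set (Bool × Bool)) := by
      ext p
      simp [g2, Matrix.range_cons, Matrix.range_empty]
      tauto
    rw [this, Set.image_insert_eq, Set.image_singleton]
  have hr1 : Set.range (ba ∘ g1) = s1 := by
    rw [Set.range_comp]
    have : Set.range g1 = ({(true, true)} : Set (Bool × Bool)) := by
      ext p
      simp [g1, Matrix.range_cons, Matrix.range_empty]
    rw [this, Set.image_singleton]
  have frTop : finrank ℝ (⊤ : LieIdeal ℝ a).toSubmodule = 4 := by
    rw [LieSubmodule.top_toSubmodule, finrank_top, finrank_eq_card_basis ba]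
    rfl
  have fr1 : finrank ℝ W1.toSubmodule = 3 := by
    rw [hW1, mkIdeal_toSubmodule, ← hr3]
    exact finrank_span_eq_card (ba.linearIndependent.comp g3 (by decide))
  have fr2 : finrank ℝ W2.toSubmodule = 2 := by
    rw [hW2, mkIdeal_toSubmodule, ← hr2]
    exact finrank_span_eq_card (ba.linearIndependent.comp g2 (by decide))
  have fr3 : finrank ℝ W3.toSubmodule = 1 := by
    rw [hW3, mkIdeal_toSubmodule, ← hr1]
    exact finrank_span_eq_card (ba.linearIndependent.comp g1 (by decide))
  have frBot : finrank ℝ (⊥ : LieIdeal ℝ a).toSubmodule = 0 := by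
    rw [LieSubmodule.bot_toSubmodule, finrank_bot]
  -- inclusions
  have le1 : W1.toSubmodule ≤ (⊤ : LieIdeal ℝ a).toSubmodule := by
    rw [LieSubmodule.top_toSubmodule]; exact le_top
  have le2 : W2.toSubmodule ≤ W1.toSubmodule := by
    rw [hW1, hW2, mkIdeal_toSubmodule, mkIdeal_toSubmodule]
    apply Submodule.span_mono
    rintro z (rfl | rfl)
    · left; rfl
    · right; left; rfl
  have le3 : W3.toSubmodule ≤ W2.toSubmodule := by
    rw [hW2, hW3, mkIdeal_toSubmodule, mkIdeal_toSubmodule]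
    apply Submodule.span_mono
    rintro z rfl
    right; rfl
  have le4 : (⊥ : LieIdeal ℝ a).toSubmodule ≤ W3.toSubmodule := by
    rw [LieSubmodule.bot_toSubmodule]; exact bot_le
  refine ⟨![⊤, W1, W2, W3, ⊥], rfl, rfl, ?_⟩
  intro k
  fin_cases k
  · exact quot_dim_one W1 ⊤ le1 3 4 fr1 frTop rfl
  · exact quot_dim_one W2 W1 le2 2 3 fr2 fr1 rfl
  · exact quot_dim_one W3 W2 le3 1 2 fr3 fr2 rfl
  · exact quot_dim_one ⊥ W3 le4 0 1 frBot fr3 rfl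

end sets
end apart

theorem g42_solvable_not_completely_solvable
    {m : Type} [LieRing m] [LieAlgebra ℝ m] (bm : Basis (Fin 4) ℝ m)
    (hm : ∀ i j : Fin 4, i < j → ⁅bm i, bm j⁆ = ∑ k, c42 i j k • bm k)
    {a : Type} [LieRing a] [LieAlgebra ℝ a] (ba : Basis (Bool × Bool) ℝ a)
    (ha1 : ∀ c : Bool, ⁅ba (c, false), ba (c, true)⁆ = ba (c, true))
    (ha2 : ∀ (c c' : Bool) (x y : Bool), c ≠ c' → ⁅ba (c, x), ba (c', y)⁆ = 0) :
    LieAlgebra.IsSolvable m ∧ ¬ HasCompleteFlagOfIdeals m 4 ∧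
    LieAlgebra.IsSolvable a ∧ HasCompleteFlagOfIdeals a 4 :=
  ⟨msolvable bm hm, mnoflag bm hm, asolvable ba ha1 ha2, aflag ba ha1 ha2⟩
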